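/- With I_n defined by the recurrence I_0 = 1, I_1 = νw - 2αz - ξ, I_{n+1} = I_1·I_n + 2αn·I_{n-1}, the formal partial derivative of I_n with respect to the parameter ξ equals -n·I_{n-1} for all n ≥ 1. -/
import Mathlib


open MvPolynomial

noncomputable def Ipoly3 (ν α : ℂ) : ℕ → MvPolynomial (Fin 3) ℂ
  | 0 => 1
  | 1 => C ν * X 1 - C (2 * α) * X 0 - X 2
  | (n + 2) => (C ν * X 1 - C (2 * α) * X 0 - X 2) * Ipoly3 ν α (n + 1)
      + C (2 * α * (n + 1)) * Ipoly3 ν α n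

lemma pderiv_two (i : Fin 3) : pderiv i (2 : MvPolynomial (Fin 3) ℂ) = 0 := by
  rw [show (2 : MvPolynomial (Fin 3) ℂ) = ((2:ℕ) : MvPolynomial (Fin 3) ℂ) by norm_cast,
    Derivation.map_natCast]

lemma aux2 (ν α : ℂ) : ∀ n : ℕ,
    pderiv 2 (Ipoly3 ν α (n + 1)) = C (-((n : ℂ) + 1)) * Ipoly3 ν α n := by
  intro n
  induction n using Nat.strong_induction_on with
  | _ n ih =>
    match n with
    | 0 =>
      simp [Ipoly3, pderiv_X]
    | 1 =>
      have h0 := ih 0 (by norm_num)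
      rw [Ipoly3.eq_3 ν α 0, map_add, Derivation.leibniz, h0]
      simp only [Ipoly3, smul_eq_mul, map_sub, map_mul, map_add, pderiv_C,
        pderiv_X_self, pderiv_X_of_ne (show (1 : Fin 3) ≠ 2 by decide),
        pderiv_X_of_ne (show (0 : Fin 3) ≠ 2 by decide), Derivation.leibniz,
        mul_zero, zero_mul, add_zero, zero_add, pderiv_two, Derivation.map_one_eq_zero,
        map_neg, map_one, map_ofNat]
      norm_num
      ring
    | (m + 2) =>
      have h1 := ih (m + 1) (by omega)
      have h0 := ih m (by omega)
      have hX : pderiv (2 : Fin 3) (C ν * X 1 - C (2 * α) * X 0 - X 2)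
          = -1 := by simp [pderiv_X]
      rw [Ipoly3.eq_3 ν α (m + 1), map_add, Derivation.leibniz, h1, Derivation.leibniz, hX,
        Ipoly3.eq_3 ν α m]
      simp only [smul_eq_mul, Derivation.leibniz, map_sub, map_mul, map_add, pderiv_C, h0,
        mul_zero, zero_mul, add_zero, zero_add, mul_neg, mul_one, neg_neg, map_neg,
        map_ofNat, map_one, map_natCast, Derivation.map_natCast, Derivation.map_one_eq_zero,
        Nat.cast_ofNat, pderiv_two]
      push_cast
      ring

theorem stmt2 (ν α : ℂ) (n : ℕ) (hn : 1 ≤ n) :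
    pderiv 2 (Ipoly3 ν α n) = C (-(n : ℂ)) * Ipoly3 ν α (n - 1) := by
  obtain ⟨m, rfl⟩ := Nat.exists_eq_add_of_le hn
  have := aux2 ν α m
  simpa [add_comm, add_comm 1 m] using this
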